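/- arXiv:2505.02039 — 2 statements merged into one kernel-verified Lean document; each statement's English description precedes it below -/
import Mathlib

section
/- Let ℓ₁, ℓ₂ > 0, set L = ℓ₁ + ℓ₂, let μ > 0 with ω = √μ satisfying cos(ω·ℓ₁) ≠ 0 and cos(ω·ℓ₂) ≠ 0, and let t ∈ ℝ. There exist functions f₁ (twice differentiable on [0,ℓ₁]) and f₂ (twice differentiable on [ℓ₁,L]), not both identically zero, satisfying: f₁'' = −μ·f₁ on [0,ℓ₁], f₂'' = −μ·f₂ on [ℓ₁,L], the Neumann conditions f₁'(0) = 0 and f₂'(L) = 0, the continuity condition f₁(ℓ₁) = f₂(ℓ₁), and the jump condition f₂'(ℓ₁) − f₁'(ℓ₁) = t·f₁(ℓ₁), if and only if ω·( tan(ω·ℓ₁) + tan(ω·ℓ₂) ) = t. -/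
/-!
Write `μ = ω²`. On an edge, the Wronskian of a solution `f` with a cosine wave is constant, so a
Neumann condition at one end of an edge of length `ℓ` forces `f' = ∓ ω tan(ωℓ) f` at the other
end, with the sign set by the orientation: this is the Dirichlet-to-Neumann map of the edge.
Adding the two outgoing derivatives at the vertex, the jump condition becomes
`ω (tan ωℓ₁ + tan ωℓ₂) f(ℓ₁) = t f(ℓ₁)`, and `f(ℓ₁) ≠ 0` because a solution with vanishing
Cauchy data at `ℓ₁` has zero energy `f'² + ω² f²`, hence vanishes. Conversely, the cosine waves
`cos ωx` and `cos ωℓ₁ / cos ωℓ₂ · cos ω(x - L)` satisfy all conditions.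
-/

open Set Real

theorem eq_of_hasDerivAt_zero_of_mem_Icc {g : ℝ → ℝ} {a b x y : ℝ}
    (hg : ∀ z ∈ Icc a b, HasDerivAt g 0 z) (hx : x ∈ Icc a b) (hy : y ∈ Icc a b) :
    g x = g y := by
  have hconst : ∀ z ∈ Icc a b, g z = g a :=
    constant_of_has_deriv_right_zero (fun z hz => (hg z hz).continuousAt.continuousWithinAt)
      fun z hz => (hg z (Ico_subset_Icc_self hz)).hasDerivWithinAt
  rw [hconst x hx, hconst y hy]

noncomputable def cosWave (A ω c : ℝ) (x : ℝ) : ℝ := A * cos (ω * (x - c))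

section cosWave

variable (A ω c : ℝ)

theorem hasDerivAt_cosWave (x : ℝ) :
    HasDerivAt (cosWave A ω c) (-(A * ω) * sin (ω * (x - c))) x :=
  ((((hasDerivAt_id' x).sub_const c).const_mul ω).cos.const_mul A).congr_deriv (by ring)

theorem deriv_cosWave : deriv (cosWave A ω c) = fun x => -(A * ω) * sin (ω * (x - c)) :=
  funext fun x => (hasDerivAt_cosWave A ω c x).deriv

theorem hasDerivAt_deriv_cosWave (x : ℝ) :
    HasDerivAt (deriv (cosWave A ω c)) (-ω ^ 2 * cosWave A ω c x) x := by
  rw [deriv_cosWave]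
  exact ((((hasDerivAt_id' x).sub_const c).const_mul ω).sin.const_mul (-(A * ω))).congr_deriv
    (by simp only [cosWave]; ring)

end cosWave

section Oscillator

variable {ω a b : ℝ} {f : ℝ → ℝ}
  (hf : ∀ x ∈ Icc a b, DifferentiableAt ℝ f x)
  (hf' : ∀ x ∈ Icc a b, DifferentiableAt ℝ (deriv f) x)
  (hf'' : ∀ x ∈ Icc a b, deriv (deriv f) x = -ω ^ 2 * f x)
include hf hf' hf''

theorem wronskian_cos_eq (c : ℝ) {x y : ℝ} (hx : x ∈ Icc a b) (hy : y ∈ Icc a b) :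
    deriv f x * cos (ω * (x - c)) + ω * f x * sin (ω * (x - c)) =
      deriv f y * cos (ω * (y - c)) + ω * f y * sin (ω * (y - c)) := by
  refine eq_of_hasDerivAt_zero_of_mem_Icc
    (g := fun z => deriv f z * cos (ω * (z - c)) + ω * f z * sin (ω * (z - c)))
    (fun z hz => ?_) hx hy
  have hθ := ((hasDerivAt_id' z).sub_const c).const_mul ω
  exact (((hf' z hz).hasDerivAt.mul hθ.cos).add
    (((hf z hz).hasDerivAt.const_mul ω).mul hθ.sin)).congr_deriv (by rw [hf'' z hz]; ring)

theorem energy_eq {x y : ℝ} (hx : x ∈ Icc a b) (hy : y ∈ Icc a b) :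
    deriv f x ^ 2 + ω ^ 2 * f x ^ 2 = deriv f y ^ 2 + ω ^ 2 * f y ^ 2 := by
  refine eq_of_hasDerivAt_zero_of_mem_Icc (g := fun z => deriv f z ^ 2 + ω ^ 2 * f z ^ 2)
    (fun z hz => ?_) hx hy
  exact (((hf' z hz).hasDerivAt.pow 2).add (((hf z hz).hasDerivAt.pow 2).const_mul (ω ^ 2)))
    |>.congr_deriv (by rw [hf'' z hz]; ring)

theorem eq_zero_of_eq_zero_of_deriv_eq_zero (hω : ω ≠ 0) {p : ℝ} (hp : p ∈ Icc a b)
    (hfp : f p = 0) (hf'p : deriv f p = 0) {x : ℝ} (hx : x ∈ Icc a b) : f x = 0 := by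
  have hE := energy_eq hf hf' hf'' hx hp
  rw [hfp, hf'p] at hE
  have : ω ^ 2 * f x ^ 2 = 0 := by nlinarith [sq_nonneg (deriv f x), sq_nonneg (ω * f x)]
  simpa [hω] using this

theorem deriv_right_eq_of_deriv_left_eq_zero (hab : a ≤ b) (ha : deriv f a = 0)
    (hc : cos (ω * (b - a)) ≠ 0) : deriv f b = -(ω * tan (ω * (b - a))) * f b := by
  have hW := wronskian_cos_eq hf hf' hf'' a (right_mem_Icc.2 hab) (left_mem_Icc.2 hab)
  simp only [sub_self, mul_zero, cos_zero, sin_zero, ha] at hW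
  rw [tan_eq_sin_div_cos]
  field_simp
  linarith

theorem deriv_left_eq_of_deriv_right_eq_zero (hab : a ≤ b) (hb : deriv f b = 0)
    (hc : cos (ω * (b - a)) ≠ 0) : deriv f a = ω * tan (ω * (b - a)) * f a := by
  have hW := wronskian_cos_eq hf hf' hf'' b (left_mem_Icc.2 hab) (right_mem_Icc.2 hab)
  rw [← neg_sub b a, mul_neg, cos_neg, sin_neg] at hW
  simp only [sub_self, mul_zero, cos_zero, sin_zero, hb] at hW
  rw [tan_eq_sin_div_cos]
  field_simp
  linarith

end Oscillator

theorem mul_tan_add_tan_eq_of_delta_vertex {ℓ₁ ℓ₂ ω t : ℝ} {f₁ f₂ : ℝ → ℝ}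
    (h1 : 0 < ℓ₁) (h2 : 0 < ℓ₂) (hω : ω ≠ 0)
    (hc1 : cos (ω * ℓ₁) ≠ 0) (hc2 : cos (ω * ℓ₂) ≠ 0)
    (hf₁ : ∀ x ∈ Icc 0 ℓ₁, DifferentiableAt ℝ f₁ x)
    (hf₁' : ∀ x ∈ Icc 0 ℓ₁, DifferentiableAt ℝ (deriv f₁) x)
    (hf₁'' : ∀ x ∈ Icc 0 ℓ₁, deriv (deriv f₁) x = -ω ^ 2 * f₁ x)
    (hf₂ : ∀ x ∈ Icc ℓ₁ (ℓ₁ + ℓ₂), DifferentiableAt ℝ f₂ x)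
    (hf₂' : ∀ x ∈ Icc ℓ₁ (ℓ₁ + ℓ₂), DifferentiableAt ℝ (deriv f₂) x)
    (hf₂'' : ∀ x ∈ Icc ℓ₁ (ℓ₁ + ℓ₂), deriv (deriv f₂) x = -ω ^ 2 * f₂ x)
    (hN₀ : deriv f₁ 0 = 0) (hN : deriv f₂ (ℓ₁ + ℓ₂) = 0) (hcont : f₁ ℓ₁ = f₂ ℓ₁)
    (hjump : deriv f₂ ℓ₁ - deriv f₁ ℓ₁ = t * f₁ ℓ₁)
    (hnz : ¬((∀ x ∈ Icc 0 ℓ₁, f₁ x = 0) ∧ ∀ x ∈ Icc ℓ₁ (ℓ₁ + ℓ₂), f₂ x = 0)) :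
    ω * (tan (ω * ℓ₁) + tan (ω * ℓ₂)) = t := by
  have hℓ₂ : ℓ₁ + ℓ₂ - ℓ₁ = ℓ₂ := by ring
  have hD₁ : deriv f₁ ℓ₁ = -(ω * tan (ω * ℓ₁)) * f₁ ℓ₁ := by
    simpa using deriv_right_eq_of_deriv_left_eq_zero hf₁ hf₁' hf₁'' h1.le hN₀ (by simpa)
  have hD₂ : deriv f₂ ℓ₁ = ω * tan (ω * ℓ₂) * f₂ ℓ₁ := by
    simpa [hℓ₂] using deriv_left_eq_of_deriv_right_eq_zero hf₂ hf₂' hf₂'' (by linarith) hN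
      (by rwa [hℓ₂])
  have hV : f₁ ℓ₁ ≠ 0 := fun hV => hnz
    ⟨fun _ => eq_zero_of_eq_zero_of_deriv_eq_zero hf₁ hf₁' hf₁'' hω
        (right_mem_Icc.2 h1.le) hV (by rw [hD₁, hV, mul_zero]),
      fun _ => eq_zero_of_eq_zero_of_deriv_eq_zero hf₂ hf₂' hf₂'' hω
        (left_mem_Icc.2 (by linarith)) (hcont ▸ hV) (by rw [hD₂, ← hcont, hV, mul_zero])⟩
  apply mul_right_cancel₀ hV
  rw [← hjump, hD₁, hD₂, ← hcont]
  ring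

/-- On the interval [0, ℓ₁+ℓ₂] with a δ(t) vertex at ℓ₁ and Neumann
conditions at both ends, μ = ω² (with cos(ωℓᵢ) ≠ 0) is an eigenvalue iff
ω·(tan(ωℓ₁) + tan(ωℓ₂)) = t. -/
theorem stmt_14 (ℓ₁ ℓ₂ μ ω t : ℝ) (h1 : 0 < ℓ₁) (h2 : 0 < ℓ₂) (hμ : 0 < μ)
    (hω : ω = Real.sqrt μ)
    (hc1 : Real.cos (ω * ℓ₁) ≠ 0) (hc2 : Real.cos (ω * ℓ₂) ≠ 0) :
    (∃ f₁ f₂ : ℝ → ℝ,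
      (∀ x ∈ Set.Icc (0:ℝ) ℓ₁, DifferentiableAt ℝ f₁ x) ∧
      (∀ x ∈ Set.Icc (0:ℝ) ℓ₁, DifferentiableAt ℝ (deriv f₁) x) ∧
      (∀ x ∈ Set.Icc (0:ℝ) ℓ₁, deriv (deriv f₁) x = -μ * f₁ x) ∧
      (∀ x ∈ Set.Icc ℓ₁ (ℓ₁ + ℓ₂), DifferentiableAt ℝ f₂ x) ∧
      (∀ x ∈ Set.Icc ℓ₁ (ℓ₁ + ℓ₂), DifferentiableAt ℝ (deriv f₂) x) ∧
      (∀ x ∈ Set.Icc ℓ₁ (ℓ₁ + ℓ₂), deriv (deriv f₂) x = -μ * f₂ x) ∧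
      deriv f₁ 0 = 0 ∧ deriv f₂ (ℓ₁ + ℓ₂) = 0 ∧
      f₁ ℓ₁ = f₂ ℓ₁ ∧
      deriv f₂ ℓ₁ - deriv f₁ ℓ₁ = t * f₁ ℓ₁ ∧
      ¬((∀ x ∈ Set.Icc (0:ℝ) ℓ₁, f₁ x = 0) ∧ (∀ x ∈ Set.Icc ℓ₁ (ℓ₁ + ℓ₂), f₂ x = 0))) ↔
    ω * (Real.tan (ω * ℓ₁) + Real.tan (ω * ℓ₂)) = t := by
  have hω0 : ω ≠ 0 := hω ▸ (sqrt_pos.2 hμ).ne'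
  obtain rfl : μ = ω ^ 2 := by rw [hω, sq_sqrt hμ.le]
  constructor
  · rintro ⟨f₁, f₂, hf₁, hf₁', hf₁'', hf₂, hf₂', hf₂'', hN₀, hN, hcont, hjump, hnz⟩
    exact mul_tan_add_tan_eq_of_delta_vertex h1 h2 hω0 hc1 hc2 hf₁ hf₁' hf₁'' hf₂ hf₂' hf₂''
      hN₀ hN hcont hjump hnz
  · intro ht
    have hℓ : ω * (ℓ₁ - (ℓ₁ + ℓ₂)) = -(ω * ℓ₂) := by ring
    refine ⟨cosWave 1 ω 0, cosWave (cos (ω * ℓ₁) / cos (ω * ℓ₂)) ω (ℓ₁ + ℓ₂),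
      fun x _ => (hasDerivAt_cosWave _ _ _ x).differentiableAt,
      fun x _ => (hasDerivAt_deriv_cosWave _ _ _ x).differentiableAt,
      fun x _ => (hasDerivAt_deriv_cosWave _ _ _ x).deriv,
      fun x _ => (hasDerivAt_cosWave _ _ _ x).differentiableAt,
      fun x _ => (hasDerivAt_deriv_cosWave _ _ _ x).differentiableAt,
      fun x _ => (hasDerivAt_deriv_cosWave _ _ _ x).deriv, ?_, ?_, ?_, ?_, ?_⟩
    · simp [deriv_cosWave]
    · simp [deriv_cosWave]
    · simp only [cosWave, hℓ, cos_neg, sub_zero, one_mul]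
      field_simp
    · simp only [deriv_cosWave, cosWave, hℓ, sin_neg, sub_zero, one_mul]
      rw [← ht, tan_eq_sin_div_cos, tan_eq_sin_div_cos]
      field_simp
      ring
    · exact fun h => by simpa [cosWave] using h.1 0 (left_mem_Icc.2 h1.le)
end

section
/- Let ℓ > 0, t ∈ ℝ, and let n ≥ 1 be an integer. Then there exists exactly one k in the open interval ((2n−1)·π/(2ℓ), (2n+1)·π/(2ℓ)) satisfying k·sin(k·ℓ) = t·cos(k·ℓ). -/
/-!
Substituting `x = k ℓ`, the equation becomes `x sin x = (t ℓ) cos x` on the branch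
`(n π - π / 2, n π + π / 2)` of `tan`, where `cos x ≠ 0`, so it reads `x tan x = t ℓ`.
For `x > 0` the function `x tan x` has derivative `(sin x cos x + x) / cos² x > 0`, and on the
branch it runs from `-∞` to `+∞` because `tan` does while `x` stays positive; hence it takes
every value exactly once.
-/

open Real Set Filter Topology

namespace Real

def tanBranch (n : ℤ) : Set ℝ := Ioo (n * π - π / 2) (n * π + π / 2)

lemma sub_int_mul_pi_mem_Ioo_of_mem_tanBranch {n : ℤ} {x : ℝ} (hx : x ∈ tanBranch n) :
    x - n * π ∈ Ioo (-(π / 2)) (π / 2) :=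
  ⟨by linarith [hx.1], by linarith [hx.2]⟩

lemma cos_ne_zero_of_mem_tanBranch {n : ℤ} {x : ℝ} (hx : x ∈ tanBranch n) : cos x ≠ 0 := by
  have h := cos_pos_of_mem_Ioo (sub_int_mul_pi_mem_Ioo_of_mem_tanBranch hx)
  rw [cos_sub_int_mul_pi] at h
  exact right_ne_zero_of_mul h.ne'

lemma tanBranch_subset_Ioi_zero {n : ℤ} (hn : 1 ≤ n) : tanBranch n ⊆ Ioi 0 := fun x hx => by
  have : (1 : ℝ) ≤ n := by exact_mod_cast hn
  exact lt_trans (by nlinarith [pi_pos]) hx.1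

lemma mul_sin_eq_mul_cos_iff {x c : ℝ} (hx : cos x ≠ 0) :
    x * sin x = c * cos x ↔ x * tan x = c := by
  rw [tan_eq_sin_div_cos, mul_div_assoc', div_eq_iff hx]

lemma sin_mul_cos_add_pos {x : ℝ} (hx : 0 < x) : 0 < sin x * cos x + x := by
  have hsin : |sin x| < x := by simpa [abs_of_pos hx] using abs_sin_lt_abs hx.ne'
  have : |sin x * cos x| ≤ |sin x| := by
    rw [abs_mul]; exact mul_le_of_le_one_right (abs_nonneg _) (abs_cos_le_one x)
  linarith [neg_abs_le (sin x * cos x)]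

lemma hasDerivAt_mul_tan {x : ℝ} (hx : cos x ≠ 0) :
    HasDerivAt (fun y => y * tan y) ((sin x * cos x + x) / cos x ^ 2) x := by
  refine ((hasDerivAt_id x).mul (hasDerivAt_tan hx)).congr_deriv ?_
  rw [id, tan_eq_sin_div_cos]
  field_simp

lemma strictMonoOn_mul_tan {s : Set ℝ} (hs : Convex ℝ s) (hpos : s ⊆ Ioi 0)
    (hcos : ∀ x ∈ s, cos x ≠ 0) : StrictMonoOn (fun x => x * tan x) s := by
  refine strictMonoOn_of_hasDerivWithinAt_pos hs
    (fun x hx => (hasDerivAt_mul_tan (hcos x hx)).continuousAt.continuousWithinAt)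
    (fun x hx => (hasDerivAt_mul_tan (hcos x (interior_subset hx))).hasDerivWithinAt) ?_
  intro x hx
  have hx := interior_subset hx
  exact div_pos (sin_mul_cos_add_pos (hpos hx)) (pow_two_pos_of_ne_zero (hcos x hx))

lemma surjOn_mul_tan_tanBranch {n : ℤ} (hn : 1 ≤ n) :
    SurjOn (fun x => x * tan x) (tanBranch n) univ := by
  have hn' : (1 : ℝ) ≤ n := by exact_mod_cast hn
  have hlt : n * π - π / 2 < n * π + π / 2 := by linarith [pi_pos]
  have hleft : 0 < n * π - π / 2 := by nlinarith [pi_pos]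
  have hshift {a b : ℝ} (hab : a - n * π = b) :
      Tendsto (fun x => x - n * π) (𝓝[>] a) (𝓝[>] b) := by
    rw [← hab, ← map_subRight_nhdsGT]; exact tendsto_map
  have hshift' {a b : ℝ} (hab : a - n * π = b) :
      Tendsto (fun x => x - n * π) (𝓝[<] a) (𝓝[<] b) := by
    rw [← hab, ← map_subRight_nhdsLT]; exact tendsto_map
  refine ContinuousOn.surjOn_of_tendsto (s := Ioo _ _) (nonempty_Ioo.2 hlt)
    (fun x hx => (hasDerivAt_mul_tan (cos_ne_zero_of_mem_tanBranch hx)).continuousAt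
      |>.continuousWithinAt) ?_ ?_
  · refine (tendsto_comp_coe_Ioo_atBot hlt (f := fun x => x * tan x)).2 ?_
    refine (tendsto_nhdsWithin_of_tendsto_nhds tendsto_id).pos_mul_atBot hleft ?_
    exact (tendsto_tan_neg_pi_div_two.comp (hshift (by ring))).congr
      fun x => tan_sub_int_mul_pi x n
  · refine (tendsto_comp_coe_Ioo_atTop hlt (f := fun x => x * tan x)).2 ?_
    refine (tendsto_nhdsWithin_of_tendsto_nhds tendsto_id).pos_mul_atTop (hleft.trans hlt) ?_
    exact (tendsto_tan_pi_div_two.comp (hshift' (by ring))).congr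
      fun x => tan_sub_int_mul_pi x n

theorem existsUnique_mul_sin_eq_mul_cos {n : ℤ} (hn : 1 ≤ n) (c : ℝ) :
    ∃! x, x ∈ tanBranch n ∧ x * sin x = c * cos x := by
  obtain ⟨x, hx, hxc⟩ := surjOn_mul_tan_tanBranch hn (mem_univ c)
  refine ⟨x, ⟨hx, (mul_sin_eq_mul_cos_iff (cos_ne_zero_of_mem_tanBranch hx)).2 hxc⟩, ?_⟩
  rintro y ⟨hy, hyc⟩
  rw [mul_sin_eq_mul_cos_iff (cos_ne_zero_of_mem_tanBranch hy)] at hyc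
  exact (strictMonoOn_mul_tan (convex_Ioo _ _) (tanBranch_subset_Ioi_zero hn)
    fun _ => cos_ne_zero_of_mem_tanBranch).injOn hy hx (hyc.trans hxc.symm)

lemma mul_mem_tanBranch_iff {ℓ k : ℝ} (hℓ : 0 < ℓ) (n : ℤ) :
    k * ℓ ∈ tanBranch n ↔ k ∈ Ioo ((2 * n - 1) * π / (2 * ℓ)) ((2 * n + 1) * π / (2 * ℓ)) := by
  have h2ℓ : 0 < 2 * ℓ := by positivity
  simp only [tanBranch, mem_Ioo, div_lt_iff₀ h2ℓ, lt_div_iff₀ h2ℓ]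
  constructor <;> rintro ⟨h₁, h₂⟩ <;> constructor <;> linarith

end Real

/-- For each ℓ > 0, t ∈ ℝ, and integer n ≥ 1, there is exactly one
k ∈ ((2n-1)π/(2ℓ), (2n+1)π/(2ℓ)) with k·sin(kℓ) = t·cos(kℓ). -/
theorem stmt_15 (ℓ t : ℝ) (hℓ : 0 < ℓ) (n : ℤ) (hn : 1 ≤ n) :
    ∃! k : ℝ,
      k ∈ Set.Ioo ((2 * (n : ℝ) - 1) * Real.pi / (2 * ℓ)) ((2 * (n : ℝ) + 1) * Real.pi / (2 * ℓ)) ∧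
      k * Real.sin (k * ℓ) = t * Real.cos (k * ℓ) := by
  refine ((Equiv.mulRight₀ ℓ hℓ.ne').existsUnique_congr fun k => ?_).2
    (existsUnique_mul_sin_eq_mul_cos hn (t * ℓ))
  rw [Equiv.mulRight₀_apply, mul_mem_tanBranch_iff hℓ, mul_right_comm, mul_right_comm t,
    mul_left_inj' hℓ.ne']
end
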